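/- Let G be a multigraph realizing degree sequence d with m_t light triple-edges, m_d light double-edges, and no other non-simple edges, and fix a simple three-star v_1v_3v_5v_7. Then the number of light simple ordered three-stars v_2v_4v_6v_8 such that (a) {v_2,v_4,v_6,v_8} ∩ {v_1,v_3,v_5,v_7} = ∅, and (b) v_1v_2 is a non-edge and none of v_3v_4, v_5v_6, v_7v_8 is a multi-edge, is at least L_3 - 18·m_t·d_h² - 12·m_d·d_h² - B_3 - 3·(m_t + m_d)·B_2 - d_h³ - 9·B_2, where B_k = Σ_{i=1}^{d_1} [d_{h+i}]_k. -/

import Mathlib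

open Finset

/-- A multigraph on `n` nodes, given by a symmetric multiplicity function.
`mult i i` is the multiplicity of the loop at `i`. -/
structure Multigraph (n : ℕ) where
  mult : Fin n → Fin n → ℕ
  symm : ∀ i j, mult i j = mult j i

namespace Multigraph

/-- The degree of a node: a loop counts twice. -/
def deg {n : ℕ} (G : Multigraph n) (i : Fin n) : ℕ :=
  2 * G.mult i i + ∑ j ∈ Finset.univ.filter (fun j => j ≠ i), G.mult i j

/-- `i j` is a simple edge: non-loop of multiplicity exactly 1. -/
def Simple {n : ℕ} (G : Multigraph n) (i j : Fin n) : Prop :=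
  i ≠ j ∧ G.mult i j = 1

instance {n : ℕ} (G : Multigraph n) (i j : Fin n) : Decidable (G.Simple i j) :=
  inferInstanceAs (Decidable (i ≠ j ∧ G.mult i j = 1))

end Multigraph

/-- The (0-indexed) degree sequence extended to all of `ℕ` by zero. -/
def dExt (n : ℕ) (d : Fin n → ℕ) (i : ℕ) : ℕ :=
  if h : i < n then d ⟨i, h⟩ else 0

/-!
Fibre the light simple stars over their centres: a light centre `c` carries exactly
`[s_c]_3` ordered stars, where `s_c` is its number of simple neighbours, and `d_c = s_c + M_c`
with `M_c` the multiplicity it loses to multi-edges. Since `[s + M]_3 ≤ [s]_3 + 3 M (s + M)^2`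
and `Σ_c M_c` is controlled by `m_t, m_d`, this gives `L_3 ≤ #stars + (18 m_t + 12 m_d) d_h^2`.
A star that is not compatible with `v₁v₃v₅v₇` has its centre equal or adjacent to `v₁`, an
outer node in `{v₃, v₅, v₇}`, or an outer node joined to its partner `vᵢ` by a multi-edge.
Each of these events is bounded by summing fibre sizes over the light neighbours of one node
(at most `d_1` of them), and a sum of `[d_c]_k` over at most `d_1` light nodes is at most `B_k`.
-/

theorem Nat.succ_descFactorial_succ_le (t k : ℕ) :
    (t + 1).descFactorial (k + 1) ≤ t.descFactorial (k + 1) + (k + 1) * t ^ k := by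
  rw [Nat.succ_descFactorial_succ, Nat.descFactorial_succ]
  calc (t + 1) * t.descFactorial k ≤ (t - k + (k + 1)) * t.descFactorial k :=
        Nat.mul_le_mul_right _ (by omega)
    _ = (t - k) * t.descFactorial k + (k + 1) * t.descFactorial k := by ring
    _ ≤ _ := Nat.add_le_add_left (Nat.mul_le_mul_left _ (Nat.descFactorial_le_pow t k)) _

theorem Nat.add_descFactorial_succ_le (s M k : ℕ) :
    (s + M).descFactorial (k + 1) ≤ s.descFactorial (k + 1) + (k + 1) * M * (s + M) ^ k := by
  induction M with
  | zero => simp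
  | succ M ih =>
    calc (s + (M + 1)).descFactorial (k + 1)
        ≤ (s + M).descFactorial (k + 1) + (k + 1) * (s + M) ^ k :=
          Nat.succ_descFactorial_succ_le _ _
      _ ≤ s.descFactorial (k + 1) + (k + 1) * (M + 1) * (s + M) ^ k := by
          have : (k + 1) * (M + 1) * (s + M) ^ k =
              (k + 1) * M * (s + M) ^ k + (k + 1) * (s + M) ^ k := by ring
          omega
      _ ≤ s.descFactorial (k + 1) + (k + 1) * (M + 1) * (s + (M + 1)) ^ k := by
          gcongr; omega

theorem Finset.card_offDiag_eq_descFactorial {α : Type*} [DecidableEq α] (s : Finset α) :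
    #s.offDiag = (#s).descFactorial 2 := by
  rw [offDiag_card, ← Nat.mul_sub_one]
  cases #s with
  | zero => rfl
  | succ m => rw [Nat.succ_descFactorial_succ, Nat.descFactorial_one, Nat.add_sub_cancel]

section DistinctTriples

variable {α : Type*} [DecidableEq α]

def distinctTriples (s : Finset α) : Finset (α × α × α) :=
  {t ∈ s ×ˢ s ×ˢ s | t.1 ≠ t.2.1 ∧ t.1 ≠ t.2.2 ∧ t.2.1 ≠ t.2.2}

theorem card_distinctTriples (s : Finset α) : #(distinctTriples s) = (#s).descFactorial 3 := by
  have hfiber : ∀ a ∈ s, {t ∈ distinctTriples s | t.1 = a} = {a} ×ˢ (s.erase a).offDiag := by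
    intro a _
    ext ⟨x, y, z⟩
    simp only [distinctTriples, mem_filter, mem_product, mem_singleton, mem_offDiag, mem_erase]
    grind
  rw [card_eq_sum_card_fiberwise (f := Prod.fst) (s := distinctTriples s) (t := s)
      fun t ht => (mem_product.1 (mem_filter.1 ht).1).1,
    sum_congr rfl fun a ha => by rw [hfiber a ha, card_product, card_singleton, one_mul,
      card_offDiag_eq_descFactorial, card_erase_of_mem ha], sum_const, smul_eq_mul]
  cases #s with
  | zero => rfl
  | succ m => rw [Nat.succ_descFactorial_succ, Nat.add_sub_cancel]

end DistinctTriples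

theorem Finset.card_filter_comp_involutive {α : Type*} (s : Finset α) {σ : α → α}
    (hσ : Function.Involutive σ) (hs : ∀ a ∈ s, σ a ∈ s) (p : α → Prop) [DecidablePred p] :
    #{a ∈ s | p (σ a)} = #{a ∈ s | p a} :=
  card_nbij' σ σ
    (fun a ha => by rw [mem_coe, mem_filter] at ha ⊢; exact ⟨hs a ha.1, ha.2⟩)
    (fun a ha => by rw [mem_coe, mem_filter] at ha ⊢; exact ⟨hs a ha.1, by rw [hσ a]; exact ha.2⟩)
    (fun a _ => hσ a) (fun a _ => hσ a)

theorem apply_le_dExt {n : ℕ} {d : Fin n → ℕ} (hd : Antitone d) {i : ℕ} {c : Fin n}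
    (hi : i ≤ c.val) : d c ≤ dExt n d i := by
  have hin : i < n := hi.trans_lt c.isLt
  simpa [dExt, hin] using hd (show (⟨i, hin⟩ : Fin n) ≤ c from hi)

theorem sum_le_sum_range_dExt {n : ℕ} {d : Fin n → ℕ} (hd : Antitone d) {f : ℕ → ℕ}
    (hf : Monotone f) :
    ∀ (m h : ℕ) (C : Finset (Fin n)), (∀ c ∈ C, h ≤ c.val) → #C ≤ m →
      ∑ c ∈ C, f (d c) ≤ ∑ i ∈ range m, f (dExt n d (h + i))
  | 0, _, C, _, hCm => by simp [card_eq_zero.1 (Nat.le_zero.1 hCm)]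
  | m + 1, h, C, hC, hCm => by
    rcases C.eq_empty_or_nonempty with rfl | hne
    · simp
    have hmin := C.min'_mem hne
    have hrest : ∀ c ∈ C.erase (C.min' hne), h + 1 ≤ c.val := fun c hc =>
      (hC _ hmin).trans_lt (C.min'_lt_of_mem_erase_min' hne hc)
    have ih := sum_le_sum_range_dExt hd hf m (h + 1) _ hrest
      (by rw [card_erase_of_mem hmin]; omega)
    rw [← add_sum_erase C _ hmin, sum_range_succ', add_comm]
    simp only [add_assoc, add_comm 1] at ih ⊢
    exact Nat.add_le_add ih (hf (apply_le_dExt hd (by simpa using hC _ hmin)))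

/-- `B_k` of the paper. -/
def starBound (n h : ℕ) (d : Fin n → ℕ) (k : ℕ) : ℕ :=
  ∑ i ∈ range (dExt n d 0), (dExt n d (h + i)).descFactorial k

namespace Multigraph

variable {n : ℕ} (G : Multigraph n)

def simpleNbrs (c : Fin n) : Finset (Fin n) := {j | G.Simple c j}

@[simp]
theorem mem_simpleNbrs {c j : Fin n} : j ∈ G.simpleNbrs c ↔ G.Simple c j := by
  simp [simpleNbrs]

theorem deg_eq_sum_mult {c : Fin n} (hc : G.mult c c = 0) : G.deg c = ∑ j, G.mult c j := by
  rw [deg, hc, filter_ne', sum_erase _ hc, mul_zero, zero_add]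

theorem card_filter_mult_ne_zero_le_deg {c : Fin n} (hc : G.mult c c = 0) :
    #{j | G.mult c j ≠ 0} ≤ G.deg c := by
  rw [card_filter, G.deg_eq_sum_mult hc]
  exact sum_le_sum fun j _ => by split_ifs <;> omega

theorem card_simpleNbrs_le_deg {c : Fin n} (hc : G.mult c c = 0) :
    #(G.simpleNbrs c) ≤ G.deg c :=
  (card_le_card fun j hj => by
    rw [mem_simpleNbrs] at hj; simp [hj.2]).trans
    (G.card_filter_mult_ne_zero_le_deg hc)

theorem deg_eq_card_simpleNbrs_add {c : Fin n} (hc : G.mult c c = 0)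
    (hmax : ∀ j, G.mult c j ≤ 3) :
    G.deg c = #(G.simpleNbrs c) + (2 * #{j | G.mult c j = 2} + 3 * #{j | G.mult c j = 3}) := by
  rw [G.deg_eq_sum_mult hc, simpleNbrs, card_filter, card_filter, card_filter, mul_sum, mul_sum,
    ← sum_add_distrib, ← sum_add_distrib]
  refine sum_congr rfl fun j _ => ?_
  by_cases hj : c = j
  · subst hj
    simp [Simple, hc]
  · have := hmax j
    simp only [Simple, hj, ne_eq, not_false_eq_true, true_and]
    interval_cases G.mult c j <;> simp

theorem sum_card_filter_mult_eq_le (h : ℕ) (hloop : ∀ i, G.mult i i = 0) {k : ℕ} (hk : k ≠ 0) :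
    ∑ c ∈ univ.filter (fun c : Fin n => h ≤ c.val), #{j | G.mult c j = k} ≤
      #(univ.filter (fun p : Fin n × Fin n =>
        p.1 ≠ p.2 ∧ G.mult p.1 p.2 = k ∧ (h ≤ p.1.val ∨ h ≤ p.2.val))) := by
  set Q : Finset (Fin n × Fin n) := {p | h ≤ p.1.val ∧ G.mult p.1 p.2 = k}
  have hfiber : ∀ c ∈ univ.filter (fun c : Fin n => h ≤ c.val),
      {p ∈ Q | p.1 = c} = ({c} : Finset (Fin n)) ×ˢ ({j | G.mult c j = k} : Finset (Fin n)) := by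
    intro c hc
    ext ⟨a, b⟩
    simp only [Q, mem_filter, mem_univ, true_and, mem_product, mem_singleton] at hc ⊢
    grind
  calc ∑ c ∈ univ.filter (fun c : Fin n => h ≤ c.val), #{j | G.mult c j = k}
      = ∑ c ∈ univ.filter (fun c : Fin n => h ≤ c.val), #{p ∈ Q | p.1 = c} :=
        sum_congr rfl fun c hc => by rw [hfiber c hc, card_product, card_singleton, one_mul]
    _ = #Q := (card_eq_sum_card_fiberwise fun p hp => by simp_all [Q]).symm
    _ ≤ _ := card_le_card fun p hp => by
        simp only [Q, mem_filter, mem_univ, true_and] at hp ⊢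
        refine ⟨fun he => hk ?_, hp.2, Or.inl hp.1⟩
        rw [← hp.2, he, hloop]

/-- Each multi-edge `wu` is counted twice among the ordered pairs, as `(w, u)` and `(u, w)`. -/
theorem two_mul_card_filter_two_le_mult_le (h : ℕ) (hloop : ∀ i, G.mult i i = 0)
    (hmax : ∀ i j, G.mult i j ≤ 3)
    (hlight : ∀ i j : Fin n, i ≠ j → 2 ≤ G.mult i j → (h ≤ i.val ∨ h ≤ j.val)) (w : Fin n) :
    2 * #{u | 2 ≤ G.mult w u} ≤
      #(univ.filter (fun p : Fin n × Fin n =>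
        p.1 ≠ p.2 ∧ G.mult p.1 p.2 = 3 ∧ (h ≤ p.1.val ∨ h ≤ p.2.val))) +
      #(univ.filter (fun p : Fin n × Fin n =>
        p.1 ≠ p.2 ∧ G.mult p.1 p.2 = 2 ∧ (h ≤ p.1.val ∨ h ≤ p.2.val))) := by
  set U : Finset (Fin n) := {u | 2 ≤ G.mult w u}
  have hUw : ∀ u ∈ U, w ≠ u := fun u hu he => by simp_all [U]
  have hdisj : Disjoint (U.map (.sectR w _)) (U.map (.sectL _ w)) := by
    simp only [disjoint_left, mem_map, Function.Embedding.sectR_apply,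
      Function.Embedding.sectL_apply]
    rintro _ ⟨u, hu, rfl⟩ ⟨u', _, he⟩
    simp only [Prod.mk.injEq] at he
    exact hUw u hu he.2
  calc 2 * #U = #(U.map (.sectR w _) ∪ U.map (.sectL _ w)) := by
        rw [card_union_of_disjoint hdisj, card_map, card_map, two_mul]
    _ ≤ #(_ ∪ _) := card_le_card ?_
    _ ≤ _ := card_union_le _ _
  simp only [subset_iff, mem_map, Function.Embedding.sectR_apply,
    Function.Embedding.sectL_apply, mem_union, mem_filter, mem_univ, true_and]
  rintro _ (⟨u, hu, rfl⟩ | ⟨u, hu, rfl⟩)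
  all_goals
    have hwu := hUw u hu
    have := hlight w u hwu (by simpa [U] using hu)
    have := hmax w u
    have := G.symm w u
    simp only [U, mem_filter, mem_univ, true_and] at hu
    grind

variable (h : ℕ)

def lightStars : Finset (Fin n × Fin n × Fin n × Fin n) :=
  {t | h ≤ t.1.val ∧ G.Simple t.1 t.2.1 ∧ G.Simple t.1 t.2.2.1 ∧ G.Simple t.1 t.2.2.2 ∧
    t.2.1 ≠ t.2.2.1 ∧ t.2.1 ≠ t.2.2.2 ∧ t.2.2.1 ≠ t.2.2.2}

@[simp]
theorem mem_lightStars {t : Fin n × Fin n × Fin n × Fin n} :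
    t ∈ G.lightStars h ↔ h ≤ t.1.val ∧ G.Simple t.1 t.2.1 ∧ G.Simple t.1 t.2.2.1 ∧
      G.Simple t.1 t.2.2.2 ∧ t.2.1 ≠ t.2.2.1 ∧ t.2.1 ≠ t.2.2.2 ∧ t.2.2.1 ≠ t.2.2.2 := by
  simp [lightStars]

theorem filter_lightStars_fst_eq (c : Fin n) :
    {t ∈ G.lightStars h | t.1 = c} =
      if h ≤ c.val then ({c} : Finset (Fin n)) ×ˢ distinctTriples (G.simpleNbrs c) else ∅ := by
  ext ⟨c', a, b, e⟩
  split_ifs <;>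
  · simp only [lightStars, distinctTriples, mem_filter, mem_univ, true_and, mem_product,
      mem_singleton, mem_simpleNbrs, notMem_empty]
    grind

theorem card_filter_lightStars_fst_le (c : Fin n) :
    #{t ∈ G.lightStars h | t.1 = c} ≤ (#(G.simpleNbrs c)).descFactorial 3 := by
  rw [filter_lightStars_fst_eq]
  split_ifs <;> simp [card_distinctTriples]

theorem card_lightStars :
    #(G.lightStars h) =
      ∑ c ∈ univ.filter (fun c : Fin n => h ≤ c.val), (#(G.simpleNbrs c)).descFactorial 3 := by
  rw [card_eq_sum_card_fiberwise (f := Prod.fst) (t := univ) fun _ _ => mem_coe.2 (mem_univ _),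
    sum_filter]
  refine sum_congr rfl fun c _ => ?_
  rw [filter_lightStars_fst_eq]
  split_ifs <;> simp [card_distinctTriples]

theorem sum_descFactorial_deg_le (hloop : ∀ i, G.mult i i = 0) (hmax : ∀ i j, G.mult i j ≤ 3)
    {D : ℕ} (hD : ∀ c : Fin n, h ≤ c.val → G.deg c ≤ D) :
    ∑ c ∈ univ.filter (fun c : Fin n => h ≤ c.val), (G.deg c).descFactorial 3 ≤
      #(G.lightStars h) + 3 * D ^ 2 *
        (2 * #(univ.filter (fun p : Fin n × Fin n =>
          p.1 ≠ p.2 ∧ G.mult p.1 p.2 = 2 ∧ (h ≤ p.1.val ∨ h ≤ p.2.val))) +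
        3 * #(univ.filter (fun p : Fin n × Fin n =>
          p.1 ≠ p.2 ∧ G.mult p.1 p.2 = 3 ∧ (h ≤ p.1.val ∨ h ≤ p.2.val)))) := by
  have hpoint : ∀ c ∈ univ.filter (fun c : Fin n => h ≤ c.val),
      (G.deg c).descFactorial 3 ≤ (#(G.simpleNbrs c)).descFactorial 3 +
        3 * (2 * #{j | G.mult c j = 2} + 3 * #{j | G.mult c j = 3}) * D ^ 2 := by
    intro c hc
    have hdeg := G.deg_eq_card_simpleNbrs_add (hloop c) (hmax c)
    have hDc : G.deg c ^ 2 ≤ D ^ 2 := Nat.pow_le_pow_left (hD c (mem_filter.1 hc).2) 2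
    calc (G.deg c).descFactorial 3
        ≤ (#(G.simpleNbrs c)).descFactorial 3 + 3 * (2 * #{j | G.mult c j = 2} +
            3 * #{j | G.mult c j = 3}) * G.deg c ^ 2 := by
          rw [hdeg]; exact Nat.add_descFactorial_succ_le _ _ 2
      _ ≤ _ := by gcongr
  have h2 := G.sum_card_filter_mult_eq_le h hloop two_ne_zero
  have h3 := G.sum_card_filter_mult_eq_le h hloop three_ne_zero
  calc _ ≤ ∑ c ∈ univ.filter (fun c : Fin n => h ≤ c.val), ((#(G.simpleNbrs c)).descFactorial 3 +
        3 * (2 * #{j | G.mult c j = 2} + 3 * #{j | G.mult c j = 3}) * D ^ 2) :=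
          sum_le_sum hpoint
    _ = #(G.lightStars h) + 3 * D ^ 2 *
          (2 * ∑ c ∈ univ.filter (fun c : Fin n => h ≤ c.val), #{j | G.mult c j = 2} +
          3 * ∑ c ∈ univ.filter (fun c : Fin n => h ≤ c.val), #{j | G.mult c j = 3}) := by
        rw [sum_add_distrib, card_lightStars, ← sum_mul, ← mul_sum, sum_add_distrib, ← mul_sum,
          ← mul_sum]
        ring
    _ ≤ _ := by gcongr

theorem card_le_starBound (hsorted : Antitone G.deg) (hloop : ∀ i, G.mult i i = 0)
    {β : Type*} (E : Finset (Fin n × β)) (w : Fin n) (k : ℕ)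
    (hE : ∀ t ∈ E, h ≤ t.1.val ∧ G.mult w t.1 ≠ 0)
    (hfiber : ∀ c, #{t ∈ E | t.1 = c} ≤ (G.deg c).descFactorial k) :
    #E ≤ starBound n h G.deg k := by
  set C : Finset (Fin n) := {c | h ≤ c.val ∧ G.mult w c ≠ 0}
  have hC : #C ≤ dExt n G.deg 0 :=
    calc #C ≤ #{c | G.mult w c ≠ 0} :=
          card_le_card fun c hc => by
            simp only [C, mem_filter, mem_univ, true_and] at hc ⊢
            exact hc.2
      _ ≤ G.deg w := G.card_filter_mult_ne_zero_le_deg (hloop w)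
      _ ≤ _ := apply_le_dExt hsorted (Nat.zero_le _)
  calc #E = ∑ c ∈ C, #{t ∈ E | t.1 = c} :=
        card_eq_sum_card_fiberwise fun t ht => by simpa [C] using hE t ht
    _ ≤ ∑ c ∈ C, (G.deg c).descFactorial k := sum_le_sum fun c _ => hfiber c
    _ ≤ _ := sum_le_sum_range_dExt hsorted (fun _ _ hab => Nat.descFactorial_le k hab) _ h C
        (fun c hc => (mem_filter.1 hc).2.1) hC

theorem card_filter_lightStars_mult_fst_ne_zero_le (hsorted : Antitone G.deg)
    (hloop : ∀ i, G.mult i i = 0) (w : Fin n) :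
    #{t ∈ G.lightStars h | G.mult w t.1 ≠ 0} ≤ starBound n h G.deg 3 := by
  refine G.card_le_starBound h hsorted hloop _ w 3 (fun t ht => ?_) fun c => ?_
  · simp only [mem_filter, mem_lightStars] at ht
    exact ⟨ht.1.1, ht.2⟩
  · calc _ ≤ #{t ∈ G.lightStars h | t.1 = c} :=
          card_le_card (filter_subset_filter _ (filter_subset _ _))
      _ ≤ (#(G.simpleNbrs c)).descFactorial 3 := G.card_filter_lightStars_fst_le h c
      _ ≤ _ := Nat.descFactorial_le 3 (G.card_simpleNbrs_le_deg (hloop c))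

theorem card_filter_lightStars_fst_eq_le (hloop : ∀ i, G.mult i i = 0) {D : ℕ}
    (hD : ∀ c : Fin n, h ≤ c.val → G.deg c ≤ D) (v : Fin n) :
    #{t ∈ G.lightStars h | t.1 = v} ≤ D ^ 3 := by
  rw [filter_lightStars_fst_eq]
  split_ifs with hv
  · rw [card_product, card_singleton, one_mul, card_distinctTriples]
    calc _ ≤ (G.deg v).descFactorial 3 :=
          Nat.descFactorial_le 3 (G.card_simpleNbrs_le_deg (hloop v))
      _ ≤ G.deg v ^ 3 := Nat.descFactorial_le_pow _ _
      _ ≤ D ^ 3 := Nat.pow_le_pow_left (hD v hv) 3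
  · simp

theorem card_filter_lightStars_outer₁_eq_le (hsorted : Antitone G.deg)
    (hloop : ∀ i, G.mult i i = 0) (u : Fin n) :
    #{t ∈ G.lightStars h | t.2.1 = u} ≤ starBound n h G.deg 2 := by
  refine G.card_le_starBound h hsorted hloop _ u 2 (fun t ht => ?_) fun c => ?_
  · simp only [mem_filter, mem_lightStars] at ht
    obtain ⟨⟨hc, ⟨-, h1⟩, -⟩, rfl⟩ := ht
    exact ⟨hc, by rw [G.symm, h1]; exact one_ne_zero⟩
  · calc _ ≤ #(({c} : Finset (Fin n)) ×ˢ ({u} : Finset (Fin n)) ×ˢ (G.simpleNbrs c).offDiag) :=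
          card_le_card fun t ht => by
            simp only [mem_filter, mem_lightStars] at ht
            simp only [mem_product, mem_singleton, mem_offDiag, mem_simpleNbrs]
            grind
      _ ≤ _ := by
          rw [card_product, card_product, card_singleton, card_singleton, one_mul, one_mul,
            card_offDiag_eq_descFactorial]
          exact Nat.descFactorial_le 2 (G.card_simpleNbrs_le_deg (hloop c))

theorem card_filter_lightStars_outer₁_mem_le (hsorted : Antitone G.deg)
    (hloop : ∀ i, G.mult i i = 0) (U : Finset (Fin n)) :
    #{t ∈ G.lightStars h | t.2.1 ∈ U} ≤ #U * starBound n h G.deg 2 :=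
  calc _ ≤ #(U.biUnion fun u => {t ∈ G.lightStars h | t.2.1 = u}) :=
        card_le_card fun t ht => by
          rw [mem_filter] at ht
          exact mem_biUnion.2 ⟨t.2.1, ht.2, mem_filter.2 ⟨ht.1, rfl⟩⟩
    _ ≤ _ := card_biUnion_le_card_mul _ _ _ fun u _ =>
        G.card_filter_lightStars_outer₁_eq_le h hsorted hloop u

theorem card_filter_lightStars_outer₂_mem_le (hsorted : Antitone G.deg)
    (hloop : ∀ i, G.mult i i = 0) (U : Finset (Fin n)) :
    #{t ∈ G.lightStars h | t.2.2.1 ∈ U} ≤ #U * starBound n h G.deg 2 :=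
  (card_filter_comp_involutive _ (σ := fun t => (t.1, t.2.2.1, t.2.1, t.2.2.2)) (fun _ => rfl)
    (fun t ht => by simp only [mem_lightStars] at ht ⊢; grind) (fun t => t.2.1 ∈ U)).trans_le
    (G.card_filter_lightStars_outer₁_mem_le h hsorted hloop U)

theorem card_filter_lightStars_outer₃_mem_le (hsorted : Antitone G.deg)
    (hloop : ∀ i, G.mult i i = 0) (U : Finset (Fin n)) :
    #{t ∈ G.lightStars h | t.2.2.2 ∈ U} ≤ #U * starBound n h G.deg 2 :=
  (card_filter_comp_involutive _ (σ := fun t => (t.1, t.2.2.2, t.2.2.1, t.2.1)) (fun _ => rfl)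
    (fun t ht => by simp only [mem_lightStars] at ht ⊢; grind) (fun t => t.2.1 ∈ U)).trans_le
    (G.card_filter_lightStars_outer₁_mem_le h hsorted hloop U)

/-- The set counted in `stmt12`. -/
def compatibleStars (v1 v3 v5 v7 : Fin n) : Finset (Fin n × Fin n × Fin n × Fin n) :=
  Finset.univ.filter (fun t : Fin n × Fin n × Fin n × Fin n =>
    h ≤ t.1.val ∧
    G.Simple t.1 t.2.1 ∧ G.Simple t.1 t.2.2.1 ∧ G.Simple t.1 t.2.2.2 ∧
    t.2.1 ≠ t.2.2.1 ∧ t.2.1 ≠ t.2.2.2 ∧ t.2.2.1 ≠ t.2.2.2 ∧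
    t.1 ≠ v1 ∧ t.1 ≠ v3 ∧ t.1 ≠ v5 ∧ t.1 ≠ v7 ∧
    t.2.1 ≠ v1 ∧ t.2.1 ≠ v3 ∧ t.2.1 ≠ v5 ∧ t.2.1 ≠ v7 ∧
    t.2.2.1 ≠ v1 ∧ t.2.2.1 ≠ v3 ∧ t.2.2.1 ≠ v5 ∧ t.2.2.1 ≠ v7 ∧
    t.2.2.2 ≠ v1 ∧ t.2.2.2 ≠ v3 ∧ t.2.2.2 ≠ v5 ∧ t.2.2.2 ≠ v7 ∧
    G.mult v1 t.1 = 0 ∧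
    G.mult v3 t.2.1 ≤ 1 ∧ G.mult v5 t.2.2.1 ≤ 1 ∧ G.mult v7 t.2.2.2 ≤ 1)

variable {v1 v3 v5 v7 : Fin n}

/-- Since `v₁` is not adjacent to the centre, the centre avoids `v₃, v₅, v₇` and no outer node
is `v₁`; every other condition of `compatibleStars` is one of the listed events. -/
theorem lightStars_sdiff_compatibleStars_subset (hs13 : G.Simple v1 v3)
    (hs15 : G.Simple v1 v5) (hs17 : G.Simple v1 v7) :
    G.lightStars h \ G.compatibleStars h v1 v3 v5 v7 ⊆
      {t ∈ G.lightStars h | G.mult v1 t.1 ≠ 0} ∪ {t ∈ G.lightStars h | t.1 = v1} ∪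
      {t ∈ G.lightStars h | t.2.1 ∈ ({v3, v5, v7} : Finset (Fin n))} ∪
      {t ∈ G.lightStars h | t.2.2.1 ∈ ({v3, v5, v7} : Finset (Fin n))} ∪
      {t ∈ G.lightStars h | t.2.2.2 ∈ ({v3, v5, v7} : Finset (Fin n))} ∪
      {t ∈ G.lightStars h | t.2.1 ∈ ({u | 2 ≤ G.mult v3 u} : Finset (Fin n))} ∪
      {t ∈ G.lightStars h | t.2.2.1 ∈ ({u | 2 ≤ G.mult v5 u} : Finset (Fin n))} ∪
      {t ∈ G.lightStars h | t.2.2.2 ∈ ({u | 2 ≤ G.mult v7 u} : Finset (Fin n))} := by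
  rintro ⟨c, a, b, e⟩ ht
  simp only [compatibleStars, mem_sdiff, mem_lightStars, mem_filter, mem_univ, true_and,
    mem_union, mem_insert, mem_singleton] at ht ⊢
  have := G.symm c v1
  unfold Simple at *
  grind

theorem card_lightStars_le_card_compatibleStars_add (hsorted : Antitone G.deg)
    (hloop : ∀ i, G.mult i i = 0) {D : ℕ} (hD : ∀ c : Fin n, h ≤ c.val → G.deg c ≤ D) {M : ℕ}
    (hmulti : ∀ w, #{u | 2 ≤ G.mult w u} ≤ M) (hs13 : G.Simple v1 v3)
    (hs15 : G.Simple v1 v5) (hs17 : G.Simple v1 v7) :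
    #(G.lightStars h) ≤ #(G.compatibleStars h v1 v3 v5 v7) +
      (starBound n h G.deg 3 + D ^ 3 + 9 * starBound n h G.deg 2 +
        3 * M * starBound n h G.deg 2) := by
  have hV : #({v3, v5, v7} : Finset (Fin n)) ≤ 3 := card_le_three
  have hcover := card_le_card (G.lightStars_sdiff_compatibleStars_subset h hs13 hs15 hs17)
  grw [card_union_le, card_union_le, card_union_le, card_union_le, card_union_le, card_union_le,
    card_union_le, G.card_filter_lightStars_mult_fst_ne_zero_le h hsorted hloop,
    G.card_filter_lightStars_fst_eq_le h hloop hD,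
    G.card_filter_lightStars_outer₁_mem_le h hsorted hloop,
    G.card_filter_lightStars_outer₂_mem_le h hsorted hloop,
    G.card_filter_lightStars_outer₃_mem_le h hsorted hloop,
    G.card_filter_lightStars_outer₁_mem_le h hsorted hloop,
    G.card_filter_lightStars_outer₂_mem_le h hsorted hloop,
    G.card_filter_lightStars_outer₃_mem_le h hsorted hloop, hV, hmulti, hmulti, hmulti] at hcover
  have := card_le_card_sdiff_add_card (s := G.lightStars h) (t := G.compatibleStars h v1 v3 v5 v7)
  linarith

end Multigraph

theorem stmt12_general (n h mt md : ℕ) (G : Multigraph n) (d : Fin n → ℕ)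
    (hdeg : ∀ i, G.deg i = d i)
    (hsorted : ∀ i j : Fin n, i ≤ j → d j ≤ d i)
    -- `mt` light triple-edges, `md` light double-edges (counted as ordered endpoint pairs)
    (htriple : (Finset.univ.filter (fun p : Fin n × Fin n =>
        p.1 ≠ p.2 ∧ G.mult p.1 p.2 = 3 ∧ (h ≤ p.1.val ∨ h ≤ p.2.val))).card = 2 * mt)
    (hdouble : (Finset.univ.filter (fun p : Fin n × Fin n =>
        p.1 ≠ p.2 ∧ G.mult p.1 p.2 = 2 ∧ (h ≤ p.1.val ∨ h ≤ p.2.val))).card = 2 * md)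
    -- no other non-simple edges
    (hnoloop : ∀ i : Fin n, G.mult i i = 0)
    (hmax : ∀ i j : Fin n, i ≠ j → G.mult i j ≤ 3)
    (hmultilight : ∀ i j : Fin n, i ≠ j → 2 ≤ G.mult i j → (h ≤ i.val ∨ h ≤ j.val))
    -- a fixed simple three-star v₁v₃v₅v₇
    (v1 v3 v5 v7 : Fin n)
    (hs13 : G.Simple v1 v3) (hs15 : G.Simple v1 v5) (hs17 : G.Simple v1 v7) :
    ((∑ i ∈ Finset.univ.filter (fun i : Fin n => h ≤ i.val),
        Nat.descFactorial (d i) 3 : ℕ) : ℤ)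
      - 18 * (mt : ℤ) * (dExt n d (h - 1) : ℤ) ^ 2
      - 12 * (md : ℤ) * (dExt n d (h - 1) : ℤ) ^ 2
      - ((∑ i ∈ Finset.range (dExt n d 0), Nat.descFactorial (dExt n d (h + i)) 3 : ℕ) : ℤ)
      - 3 * ((mt : ℤ) + (md : ℤ))
          * ((∑ i ∈ Finset.range (dExt n d 0), Nat.descFactorial (dExt n d (h + i)) 2 : ℕ) : ℤ)
      - (dExt n d (h - 1) : ℤ) ^ 3
      - 9 * ((∑ i ∈ Finset.range (dExt n d 0), Nat.descFactorial (dExt n d (h + i)) 2 : ℕ) : ℤ)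
    ≤ ((Finset.univ.filter (fun t : Fin n × Fin n × Fin n × Fin n =>
        h ≤ t.1.val ∧
        G.Simple t.1 t.2.1 ∧ G.Simple t.1 t.2.2.1 ∧ G.Simple t.1 t.2.2.2 ∧
        t.2.1 ≠ t.2.2.1 ∧ t.2.1 ≠ t.2.2.2 ∧ t.2.2.1 ≠ t.2.2.2 ∧
        t.1 ≠ v1 ∧ t.1 ≠ v3 ∧ t.1 ≠ v5 ∧ t.1 ≠ v7 ∧
        t.2.1 ≠ v1 ∧ t.2.1 ≠ v3 ∧ t.2.1 ≠ v5 ∧ t.2.1 ≠ v7 ∧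
        t.2.2.1 ≠ v1 ∧ t.2.2.1 ≠ v3 ∧ t.2.2.1 ≠ v5 ∧ t.2.2.1 ≠ v7 ∧
        t.2.2.2 ≠ v1 ∧ t.2.2.2 ≠ v3 ∧ t.2.2.2 ≠ v5 ∧ t.2.2.2 ≠ v7 ∧
        G.mult v1 t.1 = 0 ∧
        G.mult v3 t.2.1 ≤ 1 ∧ G.mult v5 t.2.2.1 ≤ 1 ∧ G.mult v7 t.2.2.2 ≤ 1)).card : ℤ) := by
  obtain rfl : d = G.deg := (funext hdeg).symm
  have hmult_le : ∀ i j, G.mult i j ≤ 3 := fun i j =>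
    if hij : i = j then by simp [hij, hnoloop] else hmax i j hij
  have hlight : ∀ c : Fin n, h ≤ c.val → G.deg c ≤ dExt n G.deg (h - 1) :=
    fun c hc => apply_le_dExt hsorted (by omega)
  have hmulti : ∀ w, #{u | 2 ≤ G.mult w u} ≤ mt + md := fun w => by
    have := G.two_mul_card_filter_two_le_mult_le h hnoloop hmult_le hmultilight w
    omega
  have hA := G.sum_descFactorial_deg_le h hnoloop hmult_le hlight
  have hB := G.card_lightStars_le_card_compatibleStars_add h hsorted hnoloop hlight hmulti
    hs13 hs15 hs17
  rw [htriple, hdouble] at hA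
  have key := (Nat.cast_le (α := ℤ)).2 (hA.trans (Nat.add_le_add_right hB _))
  simp only [Multigraph.compatibleStars, starBound, Nat.cast_add, Nat.cast_mul, Nat.cast_pow,
    Nat.cast_ofNat] at key
  linarith

/-- lower bound on the number of light simple ordered three-stars
compatible with a fixed simple three-star `v₁v₃v₅v₇`.
Here `B_k = Σ_{i=1}^{d₁} [d_{h+i}]_k` and `L₃ = Σ_{light i} [d_i]_3`. -/
theorem stmt12 (n h mt md : ℕ) (G : Multigraph n) (d : Fin n → ℕ)
    (hdeg : ∀ i, G.deg i = d i)
    (hsorted : ∀ i j : Fin n, i ≤ j → d j ≤ d i)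
    (hh1 : 1 ≤ h) (hhn : h ≤ n)
    -- `mt` light triple-edges, `md` light double-edges (counted as ordered endpoint pairs)
    (htriple : (Finset.univ.filter (fun p : Fin n × Fin n =>
        p.1 ≠ p.2 ∧ G.mult p.1 p.2 = 3 ∧ (h ≤ p.1.val ∨ h ≤ p.2.val))).card = 2 * mt)
    (hdouble : (Finset.univ.filter (fun p : Fin n × Fin n =>
        p.1 ≠ p.2 ∧ G.mult p.1 p.2 = 2 ∧ (h ≤ p.1.val ∨ h ≤ p.2.val))).card = 2 * md)
    -- no other non-simple edges
    (hnoloop : ∀ i : Fin n, G.mult i i = 0)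
    (hmax : ∀ i j : Fin n, i ≠ j → G.mult i j ≤ 3)
    (hmultilight : ∀ i j : Fin n, i ≠ j → 2 ≤ G.mult i j → (h ≤ i.val ∨ h ≤ j.val))
    -- a fixed simple three-star v₁v₃v₅v₇
    (v1 v3 v5 v7 : Fin n)
    (hs13 : G.Simple v1 v3) (hs15 : G.Simple v1 v5) (hs17 : G.Simple v1 v7)
    (hne1 : v3 ≠ v5) (hne2 : v3 ≠ v7) (hne3 : v5 ≠ v7) :
    ((∑ i ∈ Finset.univ.filter (fun i : Fin n => h ≤ i.val),
        Nat.descFactorial (d i) 3 : ℕ) : ℤ)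
      - 18 * (mt : ℤ) * (dExt n d (h - 1) : ℤ) ^ 2
      - 12 * (md : ℤ) * (dExt n d (h - 1) : ℤ) ^ 2
      - ((∑ i ∈ Finset.range (dExt n d 0), Nat.descFactorial (dExt n d (h + i)) 3 : ℕ) : ℤ)
      - 3 * ((mt : ℤ) + (md : ℤ))
          * ((∑ i ∈ Finset.range (dExt n d 0), Nat.descFactorial (dExt n d (h + i)) 2 : ℕ) : ℤ)
      - (dExt n d (h - 1) : ℤ) ^ 3
      - 9 * ((∑ i ∈ Finset.range (dExt n d 0), Nat.descFactorial (dExt n d (h + i)) 2 : ℕ) : ℤ)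
    ≤ ((Finset.univ.filter (fun t : Fin n × Fin n × Fin n × Fin n =>
        h ≤ t.1.val ∧
        G.Simple t.1 t.2.1 ∧ G.Simple t.1 t.2.2.1 ∧ G.Simple t.1 t.2.2.2 ∧
        t.2.1 ≠ t.2.2.1 ∧ t.2.1 ≠ t.2.2.2 ∧ t.2.2.1 ≠ t.2.2.2 ∧
        t.1 ≠ v1 ∧ t.1 ≠ v3 ∧ t.1 ≠ v5 ∧ t.1 ≠ v7 ∧
        t.2.1 ≠ v1 ∧ t.2.1 ≠ v3 ∧ t.2.1 ≠ v5 ∧ t.2.1 ≠ v7 ∧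
        t.2.2.1 ≠ v1 ∧ t.2.2.1 ≠ v3 ∧ t.2.2.1 ≠ v5 ∧ t.2.2.1 ≠ v7 ∧
        t.2.2.2 ≠ v1 ∧ t.2.2.2 ≠ v3 ∧ t.2.2.2 ≠ v5 ∧ t.2.2.2 ≠ v7 ∧
        G.mult v1 t.1 = 0 ∧
        G.mult v3 t.2.1 ≤ 1 ∧ G.mult v5 t.2.2.1 ≤ 1 ∧ G.mult v7 t.2.2.2 ≤ 1)).card : ℤ) :=
  stmt12_general n h mt md G d hdeg hsorted htriple hdouble hnoloop hmax hmultilight v1 v3 v5 v7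
    hs13 hs15 hs17
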